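/- arXiv:2108.11073 — 6 statements merged into one kernel-verified Lean document; each statement's English description precedes it below -/
import Mathlib

section
/- (Singular Gronwall inequality, monotone version) Let T ∈ (0, ∞], L ≥ 0 and 0 < β < 1. Let a and f be nonnegative functions on [0, T) that are locally integrable, with a nondecreasing on [0, T), and suppose that f(t) ≤ a(t) + L · ∫₀ᵗ (t − s)^(−β) f(s) ds for all t ∈ [0, T). Then for all t ∈ [0, T), f(t) ≤ a(t) · E_{1−β}(L · Γ(1 − β) · t^(1−β)), where E_ρ denotes the Mittag-Leffler function E_ρ(x) = Σ_{n=0}^∞ xⁿ / Γ(nρ + 1). -/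
/-!
Write `ρ = 1 - β` and let `I^p g (t) = ∫₀ᵗ (t - s)^(p-1) / Γ(p) · g(s) ds` be the Riemann–Liouville
integral. Since `a` is nondecreasing, the hypothesis gives `f⁺ ≤ a(t) + LΓ(ρ) · I^ρ f⁺` on `[0, t]`.
The kernels convolve as `I^p I^q = I^(p+q)` (a Beta integral) and `I^p 1 (t) = t^p / Γ(p + 1)`, so
integrating the inequality against the kernel of `I^p` raises the order by `ρ` at the cost of one
more term of the Mittag-Leffler series. After `n` steps the remainder is
`(LΓ(ρ))^(n+1) I^((n+1)ρ) f⁺ (t)`; once `(n+1)ρ ≥ 1` the kernel is bounded by its value at `s = 0`,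
so the remainder is at most `∫₀ᵗ f⁺` times `t⁻¹ xⁿ⁺¹ / Γ((n+1)ρ)` with `x = LΓ(ρ)t^ρ`, a term of a
convergent series, and it tends to `0`.
-/

open MeasureTheory Real Set Filter
open scoped ENNReal Topology Nat

lemma factorial_le_Gamma {m : ℕ} {y : ℝ} (hm : 1 ≤ m) (hy : (m : ℝ) + 1 ≤ y) :
    (m ! : ℝ) ≤ Gamma y := by
  have h2 : (2 : ℝ) ≤ m + 1 := by
    have : (1 : ℝ) ≤ m := by exact_mod_cast hm
    linarith
  rw [← Gamma_nat_eq_factorial]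
  exact Gamma_strictMonoOn_Ici.monotoneOn h2 (h2.trans hy) hy

lemma Summable.comp_div_nat {g : ℕ → ℝ} (hg : Summable g) (hg0 : ∀ n, 0 ≤ g n) (k : ℕ)
    [NeZero k] : Summable fun n => g (n / k) := by
  have hprod : Summable fun m : ℕ × Fin k => g m.1 :=
    (summable_prod_of_nonneg fun m => hg0 m.1).2
      ⟨fun _ => Summable.of_finite, by simpa using Summable.mul_left (k : ℝ) hg⟩
  refine (Equiv.summable_iff (Nat.divModEquiv k).symm).1 (hprod.congr fun m => ?_)
  simp only [Function.comp_apply, Nat.divModEquiv_symm_apply]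
  rw [add_comm, Nat.add_mul_div_right _ _ (NeZero.pos k), Nat.div_eq_of_lt m.2.isLt, zero_add]

lemma summable_pow_div_Gamma {ρ : ℝ} (hρ : 0 < ρ) (σ x : ℝ) :
    Summable fun n : ℕ => x ^ n / Gamma (n * ρ + σ) := by
  -- With `kρ ≥ 2`, eventually `Γ(nρ + σ) ≥ (n / k)!`, and `|x|ⁿ ≤ yᵏ (yᵏ)^(n / k)`.
  obtain ⟨k, hk⟩ : ∃ k : ℕ, 2 ≤ k * ρ := ⟨⌈2 / ρ⌉₊, (div_le_iff₀ hρ).1 (Nat.le_ceil _)⟩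
  have hk0 : 0 < k := Nat.pos_of_ne_zero (by rintro rfl; norm_num at hk)
  have : NeZero k := ⟨hk0.ne'⟩
  set y := max |x| 1
  have hy : 1 ≤ y := le_max_right _ _
  have hmajor : Summable fun n : ℕ => y ^ k * ((y ^ k) ^ (n / k) / (n / k)!) :=
    ((Real.summable_pow_div_factorial (y ^ k)).comp_div_nat (fun n => by positivity) k).mul_left _
  have hlarge : ∀ᶠ n : ℕ in atTop, k ≤ n ∧ 2 * (1 - σ) ≤ n * ρ :=
    (eventually_ge_atTop k).and
      ((tendsto_natCast_atTop_atTop.atTop_mul_const hρ).eventually_ge_atTop _)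
  refine Summable.of_norm_bounded_eventually_nat hmajor ?_
  filter_upwards [hlarge] with n ⟨hkn, hσn⟩
  set m := n / k
  have hm : 1 ≤ m := (Nat.le_div_iff_mul_le hk0).2 (by simpa using hkn)
  have hmn : (m : ℝ) * 2 ≤ n * ρ := by
    have : (m : ℝ) * k ≤ n := by exact_mod_cast Nat.div_mul_le_self n k
    nlinarith
  have hΓ : (m ! : ℝ) ≤ Gamma (n * ρ + σ) := factorial_le_Gamma hm (by linarith)
  have hnk : n ≤ k * m + k := by
    have := Nat.lt_mul_div_succ n hk0
    rw [mul_add, mul_one] at this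
    exact this.le
  rw [norm_div, norm_pow, Real.norm_eq_abs,
    Real.norm_of_nonneg ((by positivity : (0 : ℝ) < m !).le.trans hΓ)]
  calc |x| ^ n / Gamma (n * ρ + σ) ≤ y ^ n / m ! :=
        div_le_div₀ (by positivity) (pow_le_pow_left₀ (abs_nonneg x) (le_max_left _ _) n)
          (by positivity) hΓ
    _ ≤ y ^ (k * m + k) / m ! := by gcongr
    _ = y ^ k * ((y ^ k) ^ m / m !) := by rw [pow_add, pow_mul]; ring

lemma lintegral_rpow_mul_one_sub_rpow {p q : ℝ} (hp : 0 < p) (hq : 0 < q) :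
    ∫⁻ x in Ioo 0 1, ENNReal.ofReal (x ^ (p - 1) * (1 - x) ^ (q - 1)) =
      ENNReal.ofReal (ProbabilityTheory.beta p q) := by
  have hB := ProbabilityTheory.beta_pos hp hq
  have h := ProbabilityTheory.lintegral_betaPDF_eq_one hp hq
  rw [ProbabilityTheory.lintegral_betaPDF] at h
  simp_rw [mul_assoc, ENNReal.ofReal_mul (one_div_pos.2 hB).le] at h
  rw [lintegral_const_mul' _ _ ENNReal.ofReal_ne_top, ← ENNReal.eq_div_iff (by simpa using hB)
    ENNReal.ofReal_ne_top, ENNReal.ofReal_div_of_pos hB] at h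
  simpa using h

lemma lintegral_sub_rpow_mul_sub_rpow {p q u t : ℝ} (hp : 0 < p) (hq : 0 < q) (hut : u < t) :
    ∫⁻ s in Ioo u t, ENNReal.ofReal ((t - s) ^ (p - 1) * (s - u) ^ (q - 1)) =
      ENNReal.ofReal ((t - u) ^ (p + q - 1) * ProbabilityTheory.beta p q) := by
  have hd : 0 < t - u := sub_pos.2 hut
  have himage : (fun x => (t - u) * x + u) '' Ioo 0 1 = Ioo u t := by
    rw [image_affine_Ioo hd]; simp
  have hderiv : ∀ x ∈ Ioo (0 : ℝ) 1,
      HasDerivWithinAt (fun x => (t - u) * x + u) (t - u) (Ioo 0 1) x := fun x _ => by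
    simpa using (((hasDerivAt_id x).const_mul (t - u)).add_const u).hasDerivWithinAt
  have hsymm : ProbabilityTheory.beta p q = ProbabilityTheory.beta q p := by
    unfold ProbabilityTheory.beta; rw [mul_comm, add_comm]
  rw [← himage, lintegral_image_eq_lintegral_abs_deriv_mul measurableSet_Ioo hderiv
      (fun x _ y _ h => by simpa [hd.ne'] using h), abs_of_pos hd,
    ENNReal.ofReal_mul (by positivity), hsymm, ← lintegral_rpow_mul_one_sub_rpow hq hp,
    ← lintegral_const_mul' _ _ ENNReal.ofReal_ne_top]
  refine setLIntegral_congr_fun measurableSet_Ioo fun x ⟨hx0, hx1⟩ => ?_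
  rw [← ENNReal.ofReal_mul hd.le, ← ENNReal.ofReal_mul (by positivity)]
  congr 1
  rw [show t - ((t - u) * x + u) = (t - u) * (1 - x) by ring,
    show (t - u) * x + u - u = (t - u) * x by ring, mul_rpow hd.le (by linarith),
    mul_rpow hd.le hx0.le, show p + q - 1 = 1 + (p - 1) + (q - 1) by ring, rpow_add hd,
    rpow_add hd, rpow_one]
  ring

noncomputable def rlKernel (p r : ℝ) : ℝ := r ^ (p - 1) / Gamma p

/-- The Riemann–Liouville integral `I^p g (t)`, taken in `ℝ≥0∞` so that it is meaningful without
any integrability assumption on the singular kernel. -/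
noncomputable def rlIntegral (p : ℝ) (g : ℝ → ℝ≥0∞) (t : ℝ) : ℝ≥0∞ :=
  ∫⁻ s in Ioo 0 t, ENNReal.ofReal (rlKernel p (t - s)) * g s

lemma rlKernel_nonneg {p r : ℝ} (hp : 0 < p) (hr : 0 ≤ r) : 0 ≤ rlKernel p r :=
  div_nonneg (rpow_nonneg hr _) (Gamma_pos_of_pos hp).le

@[fun_prop]
lemma measurable_rlKernel (p : ℝ) : Measurable (rlKernel p) := by
  unfold rlKernel; fun_prop

lemma lintegral_rlKernel_mul_rlKernel {p q u t : ℝ} (hp : 0 < p) (hq : 0 < q) (hut : u < t) :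
    ∫⁻ s in Ioo u t, ENNReal.ofReal (rlKernel p (t - s) * rlKernel q (s - u)) =
      ENNReal.ofReal (rlKernel (p + q) (t - u)) := by
  have hΓ : 0 < Gamma p * Gamma q := mul_pos (Gamma_pos_of_pos hp) (Gamma_pos_of_pos hq)
  have hfactor : ∀ s, rlKernel p (t - s) * rlKernel q (s - u) =
      (Gamma p * Gamma q)⁻¹ * ((t - s) ^ (p - 1) * (s - u) ^ (q - 1)) := fun s => by
    unfold rlKernel; field_simp
  simp_rw [hfactor, ENNReal.ofReal_mul (inv_pos.2 hΓ).le]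
  rw [lintegral_const_mul' _ _ ENNReal.ofReal_ne_top, lintegral_sub_rpow_mul_sub_rpow hp hq hut,
    ← ENNReal.ofReal_mul (inv_pos.2 hΓ).le]
  congr 1
  unfold rlKernel ProbabilityTheory.beta
  field_simp

lemma lintegral_rlKernel {p t : ℝ} (hp : 0 < p) (ht : 0 ≤ t) :
    ∫⁻ s in Ioo 0 t, ENNReal.ofReal (rlKernel p (t - s)) =
      ENNReal.ofReal (rlKernel (p + 1) t) := by
  rcases ht.eq_or_lt with rfl | ht
  · simp [rlKernel, zero_rpow hp.ne']
  simpa [rlKernel] using lintegral_rlKernel_mul_rlKernel hp one_pos ht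

lemma rlIntegral_rlIntegral {p q t : ℝ} {g : ℝ → ℝ≥0∞} (hp : 0 < p) (hq : 0 < q)
    (hg : AEMeasurable g (volume.restrict (Ioo 0 t))) :
    rlIntegral p (rlIntegral q g) t = rlIntegral (p + q) g t := by
  -- Tonelli on the triangle `0 < u < s < t`, written as an indicator on the square.
  set F : ℝ × ℝ → ℝ≥0∞ := fun z => ENNReal.ofReal (rlKernel p (t - z.1)) *
    {z : ℝ × ℝ | z.2 < z.1}.indicator (fun z => ENNReal.ofReal (rlKernel q (z.1 - z.2)) * g z.2) z
  have hF : AEMeasurable F ((volume.restrict (Ioo 0 t)).prod (volume.restrict (Ioo 0 t))) := by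
    have hgz : AEMeasurable (fun z : ℝ × ℝ => g z.2)
        ((volume.restrict (Ioo 0 t)).prod (volume.restrict (Ioo 0 t))) :=
      hg.comp_quasiMeasurePreserving Measure.quasiMeasurePreserving_snd
    refine ((measurable_rlKernel p).comp
      (measurable_const.sub measurable_fst)).ennreal_ofReal.aemeasurable.mul ?_
    exact ((((measurable_rlKernel q).comp (measurable_fst.sub measurable_snd)).ennreal_ofReal
      ).aemeasurable.mul hgz).indicator (measurableSet_lt measurable_snd measurable_fst)
  have houter : ∀ s ∈ Ioo 0 t, ENNReal.ofReal (rlKernel p (t - s)) * rlIntegral q g s =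
      ∫⁻ u in Ioo 0 t, F (s, u) := by
    rintro s ⟨-, hst⟩
    have hF_eq : ∀ u, F (s, u) = ENNReal.ofReal (rlKernel p (t - s)) *
        (Iio s).indicator (fun u => ENNReal.ofReal (rlKernel q (s - u)) * g u) u := fun u => rfl
    rw [lintegral_congr hF_eq, lintegral_const_mul' _ _ ENNReal.ofReal_ne_top,
      lintegral_indicator measurableSet_Iio, Measure.restrict_restrict measurableSet_Iio,
      Iio_inter_Ioo, min_eq_left hst.le, rlIntegral]
  have hinner : ∀ u ∈ Ioo 0 t, ∫⁻ s in Ioo 0 t, F (s, u) =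
      ENNReal.ofReal (rlKernel (p + q) (t - u)) * g u := by
    rintro u ⟨hu0, hut⟩
    have hF_eq : ∀ s, F (s, u) = (Ioi u).indicator
        (fun s => ENNReal.ofReal (rlKernel p (t - s) * rlKernel q (s - u)) * g u) s := by
      intro s
      by_cases hus : u < s
      · rw [indicator_of_mem (show s ∈ Ioi u from hus),
          ENNReal.ofReal_mul' (rlKernel_nonneg hq (sub_pos.2 hus).le), mul_assoc]
        exact congrArg (ENNReal.ofReal (rlKernel p (t - s)) * ·)
          (indicator_of_mem (show (s, u) ∈ {z : ℝ × ℝ | z.2 < z.1} from hus) _)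
      · rw [indicator_of_notMem (show s ∉ Ioi u from hus)]
        exact mul_eq_zero_of_right _
          (indicator_of_notMem (show (s, u) ∉ {z : ℝ × ℝ | z.2 < z.1} from hus) _)
    rw [lintegral_congr hF_eq, lintegral_indicator measurableSet_Ioi,
      Measure.restrict_restrict measurableSet_Ioi, Ioi_inter_Ioo, max_eq_left hu0.le,
      lintegral_mul_const _ (by fun_prop), lintegral_rlKernel_mul_rlKernel hp hq hut]
  calc rlIntegral p (rlIntegral q g) t = ∫⁻ s in Ioo 0 t, ∫⁻ u in Ioo 0 t, F (s, u) :=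
        setLIntegral_congr_fun measurableSet_Ioo houter
    _ = ∫⁻ u in Ioo 0 t, ∫⁻ s in Ioo 0 t, F (s, u) := lintegral_lintegral_swap hF
    _ = rlIntegral (p + q) g t := setLIntegral_congr_fun measurableSet_Ioo hinner

lemma rlIntegral_le_of_one_le {p t : ℝ} (hp : 1 ≤ p) (g : ℝ → ℝ≥0∞) :
    rlIntegral p g t ≤ ENNReal.ofReal (rlKernel p t) * ∫⁻ s in Ioo 0 t, g s := by
  rw [← lintegral_const_mul' _ _ ENNReal.ofReal_ne_top]
  refine setLIntegral_mono' measurableSet_Ioo fun s ⟨hs0, hst⟩ => ?_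
  have hkernel : rlKernel p (t - s) ≤ rlKernel p t :=
    div_le_div_of_nonneg_right (rpow_le_rpow (by linarith) (by linarith) (by linarith))
      (Gamma_pos_of_pos (by linarith)).le
  gcongr

lemma ofReal_integral_le_lintegral_ofReal {α : Type*} [MeasurableSpace α] {μ : Measure α}
    (f : α → ℝ) : ENNReal.ofReal (∫ x, f x ∂μ) ≤ ∫⁻ x, ENNReal.ofReal (f x) ∂μ := by
  by_cases hf : Integrable f μ
  · calc ENNReal.ofReal (∫ x, f x ∂μ) ≤ ENNReal.ofReal (∫ x, max (f x) 0 ∂μ) :=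
          ENNReal.ofReal_le_ofReal (integral_mono hf hf.pos_part fun x => le_max_left _ _)
      _ = ∫⁻ x, ENNReal.ofReal (max (f x) 0) ∂μ :=
          ofReal_integral_eq_lintegral_ofReal hf.pos_part (ae_of_all _ fun x => le_max_right _ _)
      _ = ∫⁻ x, ENNReal.ofReal (f x) ∂μ := by
          simp_rw [ENNReal.ofReal_max, ENNReal.ofReal_zero, max_zero]
  · simp [integral_undef hf]

lemma ofReal_intervalIntegral_le_rlIntegral {p t : ℝ} (hp : 0 < p) (ht : 0 ≤ t) (f : ℝ → ℝ) :
    ENNReal.ofReal (∫ s in (0)..t, rlKernel p (t - s) * f s) ≤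
      rlIntegral p (fun s => ENNReal.ofReal (f s)) t := by
  rw [intervalIntegral.integral_of_le ht, integral_Ioc_eq_integral_Ioo]
  refine (ofReal_integral_le_lintegral_ofReal _).trans_eq
    (setLIntegral_congr_fun measurableSet_Ioo fun s hs => ?_)
  exact ENNReal.ofReal_mul (rlKernel_nonneg hp (sub_pos.2 hs.2).le)

lemma ofReal_le_add_rlIntegral {ρ L A s : ℝ} {f : ℝ → ℝ} (hρ : 0 < ρ) (hL : 0 ≤ L)
    (hs : 0 ≤ s) (h : f s ≤ A + L * ∫ u in (0)..s, (s - u) ^ (ρ - 1) * f u) :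
    ENNReal.ofReal (f s) ≤ ENNReal.ofReal A +
      ENNReal.ofReal (L * Gamma ρ) * rlIntegral ρ (fun u => ENNReal.ofReal (f u)) s := by
  have hΓ := Gamma_pos_of_pos hρ
  have hkernel : ∫ u in (0)..s, (s - u) ^ (ρ - 1) * f u =
      Gamma ρ * ∫ u in (0)..s, rlKernel ρ (s - u) * f u := by
    rw [← intervalIntegral.integral_const_mul]
    congr 1 with u
    rw [rlKernel]; field_simp
  calc ENNReal.ofReal (f s) ≤ ENNReal.ofReal A + ENNReal.ofReal (L * Gamma ρ *
        ∫ u in (0)..s, rlKernel ρ (s - u) * f u) := by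
        rw [mul_assoc, ← hkernel]
        exact (ENNReal.ofReal_le_ofReal h).trans ENNReal.ofReal_add_le
    _ ≤ _ := by
        rw [ENNReal.ofReal_mul (by positivity)]
        gcongr
        exact ofReal_intervalIntegral_le_rlIntegral hρ hs f

lemma rlIntegral_le_of_le_add_rlIntegral {p ρ A C t : ℝ} {g : ℝ → ℝ≥0∞} (hp : 0 < p)
    (hρ : 0 < ρ) (ht : 0 ≤ t) (hg : AEMeasurable g (volume.restrict (Ioo 0 t)))
    (h : ∀ s ∈ Ioo 0 t, g s ≤ ENNReal.ofReal A + ENNReal.ofReal C * rlIntegral ρ g s) :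
    rlIntegral p g t ≤
      ENNReal.ofReal (A * rlKernel (p + 1) t) + ENNReal.ofReal C * rlIntegral (p + ρ) g t := by
  calc rlIntegral p g t ≤ ∫⁻ s in Ioo 0 t,
        (ENNReal.ofReal (rlKernel p (t - s)) * ENNReal.ofReal A +
          ENNReal.ofReal C * (ENNReal.ofReal (rlKernel p (t - s)) * rlIntegral ρ g s)) := by
        refine setLIntegral_mono' measurableSet_Ioo fun s hs => ?_
        rw [mul_left_comm, ← mul_add]
        gcongr
        exact h s hs
    _ = _ := by
        rw [lintegral_add_left (by fun_prop), lintegral_mul_const' _ _ ENNReal.ofReal_ne_top,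
          lintegral_const_mul' _ _ ENNReal.ofReal_ne_top, lintegral_rlKernel hp ht,
          ← rlIntegral, rlIntegral_rlIntegral hp hρ hg,
          ENNReal.ofReal_mul' (rlKernel_nonneg (by linarith) ht), mul_comm]

lemma pow_mul_rlKernel {ρ C t : ℝ} (ht : 0 ≤ t) (n : ℕ) :
    C ^ n * rlKernel (n * ρ + 1) t = (C * t ^ ρ) ^ n / Gamma (n * ρ + 1) := by
  rw [rlKernel, add_sub_cancel_right, mul_pow, ← rpow_natCast (t ^ ρ), ← rpow_mul ht, mul_comm ρ,
    mul_div_assoc]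

lemma le_sum_add_pow_mul_of_le {ρ A C t : ℝ} {y : ℝ≥0∞} {J : ℝ → ℝ≥0∞} (hρ : 0 < ρ)
    (hC : 0 ≤ C) (ht : 0 ≤ t) (hy : y ≤ ENNReal.ofReal A + ENNReal.ofReal C * J ρ)
    (hJ : ∀ p, 0 < p →
      J p ≤ ENNReal.ofReal (A * rlKernel (p + 1) t) + ENNReal.ofReal C * J (p + ρ))
    (n : ℕ) :
    y ≤ ∑ k ∈ Finset.range (n + 1), ENNReal.ofReal (A * ((C * t ^ ρ) ^ k / Gamma (k * ρ + 1))) +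
      ENNReal.ofReal C ^ (n + 1) * J ((n + 1 : ℕ) * ρ) := by
  induction n with
  | zero => simpa using hy
  | succ n ih =>
    have hterm : ENNReal.ofReal C ^ (n + 1) *
        ENNReal.ofReal (A * rlKernel ((n + 1 : ℕ) * ρ + 1) t) =
        ENNReal.ofReal (A * ((C * t ^ ρ) ^ (n + 1) / Gamma ((n + 1 : ℕ) * ρ + 1))) := by
      rw [← ENNReal.ofReal_pow hC, ← ENNReal.ofReal_mul (by positivity), mul_left_comm,
        pow_mul_rlKernel ht]
    have hindex : ((n + 1 : ℕ) : ℝ) * ρ + ρ = ((n + 1 + 1 : ℕ) : ℝ) * ρ := by push_cast; ring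
    set S := ∑ k ∈ Finset.range (n + 1),
      ENNReal.ofReal (A * ((C * t ^ ρ) ^ k / Gamma (k * ρ + 1)))
    calc y ≤ S + ENNReal.ofReal C ^ (n + 1) * J ((n + 1 : ℕ) * ρ) := ih
      _ ≤ S + ENNReal.ofReal C ^ (n + 1) *
          (ENNReal.ofReal (A * rlKernel ((n + 1 : ℕ) * ρ + 1) t) +
            ENNReal.ofReal C * J ((n + 1 : ℕ) * ρ + ρ)) := by
        gcongr
        exact hJ _ (by positivity)
      _ = _ := by
        rw [Finset.sum_range_succ _ (n + 1), mul_add, hterm, hindex, ← mul_assoc, ← pow_succ]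
        exact (add_assoc _ _ _).symm

lemma tendsto_pow_mul_rlIntegral {ρ C t : ℝ} {g : ℝ → ℝ≥0∞} (hρ : 0 < ρ) (hC : 0 ≤ C)
    (ht : 0 < t) (hg : ∫⁻ s in Ioo 0 t, g s ≠ ∞) :
    Tendsto (fun n : ℕ => ENNReal.ofReal C ^ (n + 1) * rlIntegral ((n + 1 : ℕ) * ρ) g t) atTop
      (𝓝 0) := by
  have hreal : Tendsto (fun n : ℕ => C ^ (n + 1) * rlKernel ((n + 1 : ℕ) * ρ) t) atTop (𝓝 0) := by
    have h := (summable_pow_div_Gamma hρ ρ (C * t ^ ρ)).tendsto_atTop_zero.const_mul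
      (C * t ^ ρ / t)
    rw [mul_zero] at h
    refine h.congr fun n => ?_
    rw [rlKernel, rpow_sub_one ht.ne', Nat.cast_succ, add_mul, one_mul, rpow_add ht,
      mul_comm (n : ℝ) ρ, rpow_mul ht.le, rpow_natCast, mul_pow, pow_succ]
    field_simp
  have hlarge : ∀ᶠ n : ℕ in atTop, 1 ≤ ((n + 1 : ℕ) : ℝ) * ρ :=
    ((tendsto_natCast_atTop_atTop.comp (tendsto_add_atTop_nat 1)).atTop_mul_const
      hρ).eventually_ge_atTop 1
  have hbound : ∀ᶠ n : ℕ in atTop,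
      ENNReal.ofReal C ^ (n + 1) * rlIntegral ((n + 1 : ℕ) * ρ) g t ≤
        ENNReal.ofReal (C ^ (n + 1) * rlKernel ((n + 1 : ℕ) * ρ) t) * ∫⁻ s in Ioo 0 t, g s := by
    filter_upwards [hlarge] with n hn
    rw [ENNReal.ofReal_mul (by positivity), ENNReal.ofReal_pow hC, mul_assoc]
    gcongr
    exact rlIntegral_le_of_one_le hn g
  have hlim := ENNReal.Tendsto.mul_const (ENNReal.tendsto_ofReal hreal) (Or.inr hg)
  rw [ENNReal.ofReal_zero, zero_mul] at hlim
  exact tendsto_of_tendsto_of_tendsto_of_le_of_le' tendsto_const_nhds hlim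
    (Eventually.of_forall fun _ => bot_le) hbound

lemma le_ofReal_mul_tsum_of_le_add_rlIntegral {ρ A C t : ℝ} {y : ℝ≥0∞} {g : ℝ → ℝ≥0∞}
    (hρ : 0 < ρ) (hA : 0 ≤ A) (hC : 0 ≤ C) (ht : 0 ≤ t) (hg : ∫⁻ s in Ioo 0 t, g s ≠ ∞)
    (hy : y ≤ ENNReal.ofReal A + ENNReal.ofReal C * rlIntegral ρ g t)
    (hstep : ∀ p, 0 < p → rlIntegral p g t ≤
      ENNReal.ofReal (A * rlKernel (p + 1) t) + ENNReal.ofReal C * rlIntegral (p + ρ) g t) :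
    y ≤ ENNReal.ofReal (A * ∑' n : ℕ, (C * t ^ ρ) ^ n / Gamma (n * ρ + 1)) := by
  rcases ht.eq_or_lt with rfl | ht
  · have hsum : ∑' n : ℕ, (C * 0 ^ ρ) ^ n / Gamma (n * ρ + 1) = 1 := by
      rw [zero_rpow hρ.ne', mul_zero, tsum_eq_single 0 fun n hn => by simp [hn]]
      simp
    simpa [hsum, rlIntegral] using hy
  have hpartial : Tendsto (fun n => ∑ k ∈ Finset.range (n + 1),
      ENNReal.ofReal (A * ((C * t ^ ρ) ^ k / Gamma (k * ρ + 1)))) atTop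
      (𝓝 (ENNReal.ofReal (A * ∑' n : ℕ, (C * t ^ ρ) ^ n / Gamma (n * ρ + 1)))) := by
    rw [← tsum_mul_left, ENNReal.ofReal_tsum_of_nonneg (fun n => by positivity)
      ((summable_pow_div_Gamma hρ 1 _).mul_left A)]
    exact (ENNReal.tendsto_nat_tsum _).comp (tendsto_add_atTop_nat 1)
  have hlim := hpartial.add (tendsto_pow_mul_rlIntegral hρ hC ht hg)
  rw [add_zero] at hlim
  exact ge_of_tendsto' hlim
    (le_sum_add_pow_mul_of_le (J := fun p => rlIntegral p g t) hρ hC ht.le hy hstep)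

theorem singular_gronwall_monotone_general
    (T : ℝ≥0∞) (L β : ℝ) (hL : 0 ≤ L) (hβ1 : β < 1)
    (a f : ℝ → ℝ)
    (ha_nonneg : ∀ t : ℝ, 0 ≤ t → ENNReal.ofReal t < T → 0 ≤ a t)
    (ha_mono : ∀ s t : ℝ, 0 ≤ s → s ≤ t → ENNReal.ofReal t < T → a s ≤ a t)
    (hf_loc : ∀ b : ℝ, 0 ≤ b → ENNReal.ofReal b < T → IntegrableOn f (Set.Icc 0 b))
    (hyp : ∀ t : ℝ, 0 ≤ t → ENNReal.ofReal t < T →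
      f t ≤ a t + L * ∫ s in (0:ℝ)..t, (t - s) ^ (-β) * f s) :
    ∀ t : ℝ, 0 ≤ t → ENNReal.ofReal t < T →
      f t ≤ a t * ∑' n : ℕ,
        (L * Real.Gamma (1 - β) * t ^ (1 - β)) ^ n /
          Real.Gamma ((n : ℝ) * (1 - β) + 1) := by
  intro t ht htT
  have hρ : 0 < 1 - β := sub_pos.2 hβ1
  have hsT : ∀ s ∈ Icc 0 t, ENNReal.ofReal s < T :=
    fun s hs => (ENNReal.ofReal_le_ofReal hs.2).trans_lt htT
  set g : ℝ → ℝ≥0∞ := fun s => ENNReal.ofReal (f s)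
  have hle : ∀ s ∈ Icc 0 t, g s ≤ ENNReal.ofReal (a s) +
      ENNReal.ofReal (L * Gamma (1 - β)) * rlIntegral (1 - β) g s := fun s hs =>
    ofReal_le_add_rlIntegral hρ hL hs.1 (by rw [sub_sub_cancel_left]; exact hyp s hs.1 (hsT s hs))
  have hf_int := (hf_loc t ht htT).mono_set Ioo_subset_Icc_self
  have hstep : ∀ p, 0 < p → rlIntegral p g t ≤ ENNReal.ofReal (a t * rlKernel (p + 1) t) +
      ENNReal.ofReal (L * Gamma (1 - β)) * rlIntegral (p + (1 - β)) g t := fun p hp =>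
    rlIntegral_le_of_le_add_rlIntegral hp hρ ht hf_int.aemeasurable.ennreal_ofReal fun s hs =>
      (hle s (Ioo_subset_Icc_self hs)).trans <| by
        gcongr
        exact ha_mono s t hs.1.le hs.2.le htT
  have hbound := le_ofReal_mul_tsum_of_le_add_rlIntegral hρ (ha_nonneg t ht htT)
    (by positivity) ht hf_int.lintegral_lt_top.ne (hle t ⟨ht, le_rfl⟩) hstep
  rwa [ENNReal.ofReal_le_ofReal_iff (mul_nonneg (ha_nonneg t ht htT)
    (tsum_nonneg fun n => by positivity))] at hbound

/-- **Singular Gronwall inequality, monotone version.**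
If `a` is nondecreasing and `f t ≤ a t + L ∫₀ᵗ (t-s)^(-β) f s ds` on `[0, T)`, then
`f t ≤ a t * E_{1-β}(L Γ(1-β) t^(1-β))`, where `E_ρ(x) = Σ_{n≥0} xⁿ / Γ(nρ + 1)` is
the Mittag-Leffler function. -/
theorem singular_gronwall_monotone
    (T : ℝ≥0∞) (hT : 0 < T) (L β : ℝ) (hL : 0 ≤ L) (hβ0 : 0 < β) (hβ1 : β < 1)
    (a f : ℝ → ℝ)
    (ha_nonneg : ∀ t : ℝ, 0 ≤ t → ENNReal.ofReal t < T → 0 ≤ a t)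
    (hf_nonneg : ∀ t : ℝ, 0 ≤ t → ENNReal.ofReal t < T → 0 ≤ f t)
    (ha_mono : ∀ s t : ℝ, 0 ≤ s → s ≤ t → ENNReal.ofReal t < T → a s ≤ a t)
    (ha_loc : ∀ b : ℝ, 0 ≤ b → ENNReal.ofReal b < T → IntegrableOn a (Set.Icc 0 b))
    (hf_loc : ∀ b : ℝ, 0 ≤ b → ENNReal.ofReal b < T → IntegrableOn f (Set.Icc 0 b))
    (hyp : ∀ t : ℝ, 0 ≤ t → ENNReal.ofReal t < T →
      f t ≤ a t + L * ∫ s in (0:ℝ)..t, (t - s) ^ (-β) * f s) :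
    ∀ t : ℝ, 0 ≤ t → ENNReal.ofReal t < T →
      f t ≤ a t * ∑' n : ℕ,
        (L * Real.Gamma (1 - β) * t ^ (1 - β)) ^ n /
          Real.Gamma ((n : ℝ) * (1 - β) + 1) :=
  singular_gronwall_monotone_general T L β hL hβ1 a f ha_nonneg ha_mono hf_loc hyp
end

section
/- Let H be a real Hilbert space, let B be a bounded self-adjoint linear operator on H with ⟨B v, v⟩ ≤ 0 for all v ∈ H, let k ≥ 1, and let t ≥ 0. Then for any vectors v₁, …, v_k ∈ H, the Gram determinant does not increase under application of exp(t B): det [⟨exp(t B) v_i, exp(t B) v_j⟩]_{i,j=1,…,k} ≤ det [⟨v_i, v_j⟩]_{i,j=1,…,k}. (This expresses that the k-fold wedge power of exp(t B) is a contraction on blades: ‖exp(tB)v₁ ∧ ⋯ ∧ exp(tB)v_k‖ ≤ ‖v₁ ∧ ⋯ ∧ v_k‖, where the norm of a k-blade satisfies ‖v₁ ∧ ⋯ ∧ v_k‖² = det[⟨v_i, v_j⟩].) -/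
/-!
Since `‖exp (s • B) w‖ ^ 2` has derivative `2 ⟪B (exp (s • B) w), exp (s • B) w⟫ ≤ 0`, the
operator `T = exp (t • B)` is a contraction for `t ≥ 0`. Hence the Gram matrix of `T ∘ v` is
dominated by that of `v` in the Loewner order, and the determinant is monotone on positive
semidefinite matrices for that order.
-/

open scoped RealInnerProductSpace ComplexOrder MatrixOrder

namespace Matrix

variable {n 𝕜 : Type*} [RCLike 𝕜]

section Det

variable [Fintype n] [DecidableEq n]

theorem PosSemidef.det_le_one {A : Matrix n n 𝕜} (hA : A.PosSemidef) (h : A ≤ 1) :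
    A.det ≤ 1 := by
  have h_le_one : ∀ x ∈ spectrum ℝ A, x ≤ 1 :=
    (le_algebraMap_iff_spectrum_le (r := (1 : ℝ)) hA.isHermitian).1 (by simpa using h)
  rw [hA.isHermitian.det_eq_prod_eigenvalues, ← RCLike.ofReal_prod, ← RCLike.ofReal_one,
    RCLike.ofReal_le_ofReal]
  exact Finset.prod_le_one (fun i _ ↦ hA.eigenvalues_nonneg i)
    fun i _ ↦ h_le_one _ (hA.isHermitian.eigenvalues_mem_spectrum_real i)

/- Conjugating by `S = B^{-1/2}` reduces to `B = 1`, where `det (S * A * S) ≤ 1`. -/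
theorem PosSemidef.det_le_det_of_posDef {A B : Matrix n n 𝕜} (hA : A.PosSemidef)
    (hB : B.PosDef) (hAB : A ≤ B) : A.det ≤ B.det := by
  set R := CFC.sqrt B
  have hRR : R * R = B := CFC.sqrt_mul_sqrt_self B hB.posSemidef.nonneg
  have hR : IsUnit R.det :=
    (isUnit_iff_isUnit_det R).1 <| (CFC.isUnit_sqrt_iff B hB.posSemidef.nonneg).2 hB.isUnit
  set S := R⁻¹
  have hS : S.IsHermitian := IsHermitian.inv (CFC.sqrt_nonneg B).isSelfAdjoint
  have hSBS : S * B * S = 1 := by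
    rw [← hRR, show S * (R * R) * S = (S * R) * (R * S) by noncomm_ring,
      nonsing_inv_mul R hR, mul_nonsing_inv R hR, one_mul]
  have hSAS : (S * A * S).det ≤ 1 := by
    refine PosSemidef.det_le_one ?_ ?_
    · simpa only [hS.eq] using hA.conjTranspose_mul_mul_same S
    · simpa [hSBS] using IsSelfAdjoint.conjugate_le_conjugate hAB hS
  have hdet : A.det = (S * A * S).det * B.det := by
    have : (S * A * S).det * B.det = A.det * (S * B * S).det := by simp only [det_mul]; ring
    rw [this, hSBS, det_one, mul_one]
  rw [hdet]
  exact mul_le_of_le_one_left hB.det_pos.le hSAS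

theorem PosSemidef.det_le_det {A B : Matrix n n 𝕜} (hA : A.PosSemidef) (hAB : A ≤ B) :
    A.det ≤ B.det := by
  by_cases hA_def : A.PosDef
  · have hB : B.PosDef := by simpa using hA_def.add_posSemidef hAB
    exact hA.det_le_det_of_posDef hB hAB
  · have hB : B.PosSemidef := nonneg_iff_posSemidef.1 (hA.nonneg.trans hAB)
    rw [not_not.1 (mt hA.posDef_iff_det_ne_zero.2 hA_def)]
    exact hB.det_nonneg

end Det

theorem gram_comp_le_gram {E F : Type*} [NormedAddCommGroup E] [InnerProductSpace 𝕜 E]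
    [NormedAddCommGroup F] [InnerProductSpace 𝕜 F] [Finite n] (v : n → E) {f : E →L[𝕜] F}
    (hf : ‖f‖ ≤ 1) : gram 𝕜 (f ∘ v) ≤ gram 𝕜 v :=
  calc gram 𝕜 (f ∘ v)
    _ ≤ ‖f‖ ^ 2 • gram 𝕜 v := le_iff.2 (posSemidef_opNorm_smul_gram_sub_gram v f)
    _ ≤ gram 𝕜 v := le_iff.2 <| by
      simpa [sub_smul] using (posSemidef_gram 𝕜 v).smul
        (sub_nonneg.2 (pow_le_one₀ (norm_nonneg f) hf) : (0 : ℝ) ≤ 1 - ‖f‖ ^ 2)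

end Matrix

namespace ContinuousLinearMap

variable {H : Type*} [NormedAddCommGroup H] [InnerProductSpace ℝ H] [CompleteSpace H]
  {B : H →L[ℝ] H}

theorem norm_exp_smul_apply_le (hB : ∀ v, ⟪B v, v⟫ ≤ 0) {t : ℝ} (ht : 0 ≤ t) (w : H) :
    ‖NormedSpace.exp (t • B) w‖ ≤ ‖w‖ := by
  set g : ℝ → H := fun s ↦ NormedSpace.exp (s • B) w
  have hg : ∀ s, HasDerivAt g (B (g s)) s := fun s ↦ by
    simpa [g] using (hasDerivAt_exp_smul_const' B s).clm_apply (hasDerivAt_const s w)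
  have hanti : Antitone (‖g ·‖ ^ 2) :=
    antitone_of_hasDerivAt_nonpos (fun s ↦ (hg s).norm_sq) fun s ↦ by
      rw [Pi.zero_apply, real_inner_comm]; linarith [hB (g s)]
  have hg0 : g 0 = w := by simp [g]
  simpa [hg0] using (pow_le_pow_iff_left₀ (norm_nonneg _) (norm_nonneg _) two_ne_zero).1 (hanti ht)

theorem norm_exp_smul_le_one (hB : ∀ v, ⟪B v, v⟫ ≤ 0) {t : ℝ} (ht : 0 ≤ t) :
    ‖NormedSpace.exp (t • B)‖ ≤ 1 :=
  opNorm_le_bound _ zero_le_one fun w ↦ by simpa using norm_exp_smul_apply_le hB ht w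

end ContinuousLinearMap

theorem gram_det_exp_neg_semidef_le_general
    {H : Type*} [NormedAddCommGroup H] [InnerProductSpace ℝ H] [CompleteSpace H]
    (B : H →L[ℝ] H)
    (hB_neg : ∀ v : H, ⟪B v, v⟫ ≤ 0)
    (k : ℕ) (t : ℝ) (ht : 0 ≤ t) (v : Fin k → H) :
    Matrix.det (Matrix.of fun i j : Fin k =>
        ⟪(NormedSpace.exp (t • B)) (v i), (NormedSpace.exp (t • B)) (v j)⟫)
      ≤ Matrix.det (Matrix.of fun i j : Fin k => ⟪v i, v j⟫) :=
  (Matrix.posSemidef_gram ℝ _).det_le_det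
    (Matrix.gram_comp_le_gram v (ContinuousLinearMap.norm_exp_smul_le_one hB_neg ht))

/-- If `B` is a bounded self-adjoint negative semi-definite operator on a real Hilbert
space, then for `t ≥ 0` the Gram determinant of `k` vectors does not increase under
application of `exp (t B)`; i.e. the `k`-th wedge power of `exp (t B)` is a contraction
on `k`-blades. -/
theorem gram_det_exp_neg_semidef_le
    {H : Type*} [NormedAddCommGroup H] [InnerProductSpace ℝ H] [CompleteSpace H]
    (B : H →L[ℝ] H)
    (hB_sa : ∀ v w : H, ⟪B v, w⟫ = ⟪v, B w⟫)
    (hB_neg : ∀ v : H, ⟪B v, v⟫ ≤ 0)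
    (k : ℕ) (hk : 1 ≤ k) (t : ℝ) (ht : 0 ≤ t) (v : Fin k → H) :
    Matrix.det (Matrix.of fun i j : Fin k =>
        ⟪(NormedSpace.exp (t • B)) (v i), (NormedSpace.exp (t • B)) (v j)⟫)
      ≤ Matrix.det (Matrix.of fun i j : Fin k => ⟪v i, v j⟫) :=
  gram_det_exp_neg_semidef_le_general B hB_neg k t ht v
end

section
/- Let H be a real Hilbert space and let B be a bounded self-adjoint linear operator on H which is negative semi-definite, i.e. ⟨B v, v⟩ ≤ 0 for all v ∈ H. Let k ≥ 1 and let v₁, …, v_k ∈ H. For each j ∈ {1, …, k}, let G_j be the k × k real matrix whose (a, b) entry equals ⟨B v_j, v_b⟩ if a = j, and equals ⟨v_a, v_b⟩ if a ≠ j. Then Σ_{j=1}^k det G_j ≤ 0. (This expresses that the operator B̂^{(k)}(v₁ ∧ ⋯ ∧ v_k) = Σ_j v₁ ∧ ⋯ ∧ B v_j ∧ ⋯ ∧ v_k on the k-th wedge power of H is negative semi-definite on k-blades, since ⟨B̂^{(k)}(v₁ ∧ ⋯ ∧ v_k), v₁ ∧ ⋯ ∧ v_k⟩ = Σ_j det G_j.)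 -/
/-!
Let `G` be the Gram matrix of `v` and `M = (⟪B vₐ, v_b⟫)`. The `j`-th summand is `det G` with
row `j` replaced by row `j` of `M`, so expanding along that row turns the sum into
`tr (adj G * M)`. Writing `G = Cᴴ C` gives `adj G = adj C * (adj C)ᴴ`, hence `adj G` is positive
semidefinite; so is `-M`, because `-B` is a positive operator. The trace of a product of two
positive semidefinite matrices is nonnegative.
-/

open Matrix

open scoped RealInnerProductSpace

open scoped InnerProductSpace ComplexOrder

namespace Matrix

variable {n 𝕜 : Type*} [Fintype n] [RCLike 𝕜]

theorem PosSemidef.exists_eq_conjTranspose_mul_self {A : Matrix n n 𝕜} (hA : A.PosSemidef) :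
    ∃ B : Matrix n n 𝕜, A = Bᴴ * B := by
  classical
  open scoped MatrixOrder in
  exact ⟨CFC.sqrt A, by
    rw [(CFC.sqrt_nonneg A).posSemidef.isHermitian.eq, CFC.sqrt_mul_sqrt_self A hA.nonneg]⟩

theorem PosSemidef.trace_mul_nonneg {A B : Matrix n n 𝕜} (hA : A.PosSemidef)
    (hB : B.PosSemidef) : 0 ≤ (A * B).trace := by
  obtain ⟨C, rfl⟩ := hA.exists_eq_conjTranspose_mul_self
  rw [mul_assoc, trace_mul_comm]
  exact (hB.mul_mul_conjTranspose_same C).trace_nonneg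

theorem PosSemidef.adjugate [DecidableEq n] {A : Matrix n n 𝕜} (hA : A.PosSemidef) :
    A.adjugate.PosSemidef := by
  obtain ⟨C, rfl⟩ := hA.exists_eq_conjTranspose_mul_self
  rw [adjugate_mul_distrib, ← adjugate_conjTranspose]
  exact posSemidef_self_mul_conjTranspose _

theorem sum_det_updateRow_eq_trace_adjugate_mul {R : Type*} [CommRing R] [DecidableEq n]
    (A M : Matrix n n R) : ∑ j, (A.updateRow j (M j)).det = (A.adjugate * M).trace := by
  simp_rw [← cramer_transpose_apply, cramer_eq_adjugate_mulVec, ← adjugate_transpose]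
  simp only [trace, diag_apply, mulVec, dotProduct, transpose_apply, mul_apply]
  exact Finset.sum_comm

end Matrix

namespace LinearMap.IsPositive

variable {n 𝕜 E : Type*} [Fintype n] [RCLike 𝕜] [NormedAddCommGroup E] [InnerProductSpace 𝕜 E]

theorem posSemidef_of_inner {T : E →ₗ[𝕜] E} (hT : T.IsPositive) (v : n → E) :
    (of fun i j ↦ ⟪T (v i), v j⟫_𝕜).PosSemidef := by
  refine .of_dotProduct_mulVec_nonneg ?_ fun x ↦ ?_
  · ext i j
    simp [hT.isSymmetric (v j)]
  · convert hT.inner_nonneg_left (∑ i, x i • v i)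
    simp_rw [map_sum, map_smul, sum_inner, inner_sum, inner_smul_left, inner_smul_right,
      dotProduct, mulVec, dotProduct, Finset.mul_sum]
    exact Fintype.sum_congr _ _ fun i ↦ Fintype.sum_congr _ _ fun j ↦ by
      rw [Pi.star_apply, RCLike.star_def, of_apply]; ring

end LinearMap.IsPositive

theorem wedge_derivation_neg_semidef_general
    {H : Type*} [NormedAddCommGroup H] [InnerProductSpace ℝ H]
    (B : H →L[ℝ] H)
    (hB_sa : ∀ v w : H, ⟪B v, w⟫ = ⟪v, B w⟫)
    (hB_neg : ∀ v : H, ⟪B v, v⟫ ≤ 0)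
    (k : ℕ) (v : Fin k → H) :
    ∑ j : Fin k, Matrix.det (Matrix.of fun a b : Fin k =>
        if a = j then ⟪B (v j), v b⟫ else ⟪v a, v b⟫) ≤ 0 := by
  set M : Matrix (Fin k) (Fin k) ℝ := of fun a b ↦ ⟪B (v a), v b⟫
  have hrow (j : Fin k) : (of fun a b ↦ if a = j then ⟪B (v j), v b⟫ else ⟪v a, v b⟫) =
      (gram ℝ v).updateRow j (M j) := by
    ext a b
    by_cases h : a = j <;> simp [h, M]
  have hnegB : ((-B : H →L[ℝ] H) : H →ₗ[ℝ] H).IsPositive :=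
    (LinearMap.isPositive_iff _).mpr
      ⟨fun x y ↦ by simp [hB_sa], fun x ↦ by simpa using hB_neg x⟩
  have hM : (-M).PosSemidef := by
    have hneg : -M = of fun a b ↦ ⟪(-B : H →L[ℝ] H) (v a), v b⟫ := by
      ext a b
      simp [M]
    exact hneg ▸ hnegB.posSemidef_of_inner v
  simp_rw [hrow, sum_det_updateRow_eq_trace_adjugate_mul]
  simpa using (posSemidef_gram ℝ v).adjugate.trace_mul_nonneg hM

/-- If `B` is a bounded self-adjoint negative semi-definite operator on a real Hilbert
space, then the operator `B̂⁽ᵏ⁾(v₁ ∧ ⋯ ∧ v_k) = Σ_j v₁ ∧ ⋯ ∧ B v_j ∧ ⋯ ∧ v_k` is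
negative semi-definite on `k`-blades: `Σ_j det G_j ≤ 0`, where `G_j` is the Gram matrix
with the `j`-th row replaced by `(⟪B v_j, v_b⟫)_b`. -/
theorem wedge_derivation_neg_semidef
    {H : Type*} [NormedAddCommGroup H] [InnerProductSpace ℝ H] [CompleteSpace H]
    (B : H →L[ℝ] H)
    (hB_sa : ∀ v w : H, ⟪B v, w⟫ = ⟪v, B w⟫)
    (hB_neg : ∀ v : H, ⟪B v, v⟫ ≤ 0)
    (k : ℕ) (hk : 1 ≤ k) (v : Fin k → H) :
    ∑ j : Fin k, Matrix.det (Matrix.of fun a b : Fin k =>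
        if a = j then ⟪B (v j), v b⟫ else ⟪v a, v b⟫) ≤ 0 :=
  wedge_derivation_neg_semidef_general B hB_sa hB_neg k v
end

section
/- For every c ≥ 0 and t ≥ 0, one has ∫₀ᵗ ( Σ_{n=1}^∞ (cⁿ / Γ(n/2)) · (t − s)^{n/2 − 1} ) ds = Σ_{n=1}^∞ (c · t^{1/2})ⁿ / Γ(n/2 + 1) = E_{1/2}(c · t^{1/2}) − 1, where E_{1/2}(x) = Σ_{n=0}^∞ xⁿ / Γ(n/2 + 1) is the Mittag-Leffler function with parameter 1/2. -/
open MeasureTheory Set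

lemma ml_summable {x : ℝ} (hx : 0 ≤ x) :
    Summable (fun n : ℕ => x ^ n / Real.Gamma ((n : ℝ) / 2 + 1)) := by
  apply Summable.even_add_odd
  · refine (Real.summable_pow_div_factorial (x ^ 2)).congr fun k => ?_
    have h1 : ((2 * k : ℕ) : ℝ) / 2 = ((k : ℕ) : ℝ) := by push_cast; ring
    rw [h1, Real.Gamma_nat_eq_factorial, ← pow_mul]
  · rw [← summable_nat_add_iff 1]
    refine Summable.of_nonneg_of_le (fun k => ?_) (fun k => ?_)
      (((summable_nat_add_iff (f := fun n => (x ^ 2) ^ n / (n.factorial : ℝ)) 1).mpr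
        (Real.summable_pow_div_factorial (x ^ 2))).mul_left x)
    · have : (0:ℝ) < Real.Gamma (((2 * (k + 1) + 1 : ℕ) : ℝ) / 2 + 1) :=
        Real.Gamma_pos_of_pos (by positivity)
      positivity
    · have harg : ((2 * (k + 1) + 1 : ℕ) : ℝ) / 2 + 1 = (k : ℝ) + 5/2 := by push_cast; ring
      have hfac : (((k + 1).factorial : ℕ) : ℝ) = Real.Gamma ((k : ℝ) + 2) := by
        have := Real.Gamma_nat_eq_factorial (k + 1)
        rw [← this]; push_cast; ring_nf
      have hmono : Real.Gamma ((k : ℝ) + 2) ≤ Real.Gamma ((k : ℝ) + 5/2) := by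
        apply Real.Gamma_strictMonoOn_Ici.monotoneOn
        · simp only [Set.mem_Ici]; linarith [Nat.cast_nonneg (α := ℝ) k]
        · simp only [Set.mem_Ici]; linarith [Nat.cast_nonneg (α := ℝ) k]
        · linarith
      have hnum : x ^ (2 * (k + 1) + 1) = x * (x ^ 2) ^ (k + 1) := by ring
      rw [harg, hnum, mul_div_assoc]
      have hb : (0:ℝ) < (((k + 1).factorial : ℕ) : ℝ) := by positivity
      have hle : (((k + 1).factorial : ℕ) : ℝ) ≤ Real.Gamma ((k : ℝ) + 5/2) := by
        rw [hfac]; exact hmono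
      gcongr

/-- For `c ≥ 0` and `t ≥ 0`,
`∫₀ᵗ Σ_{n≥1} (cⁿ/Γ(n/2)) (t−s)^{n/2−1} ds = Σ_{n≥1} (c √t)ⁿ/Γ(n/2+1) = E_{1/2}(c √t) − 1`,
where `E_{1/2}(x) = Σ_{n≥0} xⁿ/Γ(n/2+1)` is the Mittag-Leffler function with
parameter `1/2`. -/
theorem integral_mittag_leffler_half
    (c t : ℝ) (hc : 0 ≤ c) (ht : 0 ≤ t) :
    (∫ s in (0:ℝ)..t, ∑' n : ℕ,
        (c ^ (n + 1) / Real.Gamma (((n : ℝ) + 1) / 2)) *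
          (t - s) ^ (((n : ℝ) + 1) / 2 - 1))
      = (∑' n : ℕ, (c * t ^ ((1:ℝ)/2)) ^ (n + 1) / Real.Gamma (((n : ℝ) + 1) / 2 + 1))
    ∧ (∑' n : ℕ, (c * t ^ ((1:ℝ)/2)) ^ (n + 1) / Real.Gamma (((n : ℝ) + 1) / 2 + 1))
      = (∑' n : ℕ, (c * t ^ ((1:ℝ)/2)) ^ n / Real.Gamma ((n : ℝ) / 2 + 1)) - 1 := by
  set x := c * t ^ ((1:ℝ)/2) with hxdef
  have hx : 0 ≤ x := mul_nonneg hc (Real.rpow_nonneg ht _)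
  have hp : ∀ n : ℕ, (0:ℝ) < ((n:ℝ)+1)/2 := fun n => by positivity
  have hΓpos : ∀ n : ℕ, 0 < Real.Gamma (((n:ℝ)+1)/2) := fun n =>
    Real.Gamma_pos_of_pos (hp n)
  have hrm1 : ∀ n : ℕ, (-1:ℝ) < ((n:ℝ)+1)/2 - 1 := fun n => by
    have := hp n; linarith
  set F : ℕ → ℝ → ℝ := fun n s =>
    (c ^ (n + 1) / Real.Gamma (((n : ℝ) + 1) / 2)) * (t - s) ^ (((n : ℝ) + 1) / 2 - 1)
    with hF
  -- value of each term's integral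
  have hval : ∀ n : ℕ, (∫ s in (0:ℝ)..t, F n s)
      = x ^ (n+1) / Real.Gamma (((n:ℝ)+1)/2 + 1) := by
    intro n
    rw [hF]
    simp only
    rw [intervalIntegral.integral_const_mul,
      intervalIntegral.integral_comp_sub_left (fun u => u ^ (((n:ℝ)+1)/2 - 1)) t]
    simp only [sub_self, sub_zero]
    rw [integral_rpow (Or.inl (hrm1 n))]
    have h1 : (((n:ℝ)+1)/2 - 1 + 1) = ((n:ℝ)+1)/2 := by ring
    rw [h1, Real.zero_rpow (ne_of_gt (hp n)), sub_zero,
      Real.Gamma_add_one (ne_of_gt (hp n))]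
    have ht2 : t ^ (((n:ℝ)+1)/2) = (t ^ ((1:ℝ)/2)) ^ (n+1) := by
      rw [← Real.rpow_natCast (t ^ ((1:ℝ)/2)) (n+1), ← Real.rpow_mul ht]
      push_cast; ring_nf
    rw [ht2, hxdef, mul_pow]
    have h2 := (hΓpos n).ne'
    have h3 := (hp n).ne'
    field_simp
  -- interval integrability of each term
  have hint : ∀ n : ℕ, IntervalIntegrable (F n) volume 0 t := by
    intro n
    have h := ((intervalIntegral.intervalIntegrable_rpow' (a := 0) (b := t)
      (hrm1 n)).comp_sub_left t).symm
    simp only [sub_zero, sub_self] at h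
    exact h.const_mul _
  -- nonnegativity on Ioc
  have hFnn : ∀ n : ℕ, ∀ s ∈ Ioc (0:ℝ) t, 0 ≤ F n s := by
    intro n s hs
    have h1 : 0 ≤ t - s := by linarith [hs.2]
    exact mul_nonneg (by positivity) (Real.rpow_nonneg h1 _)
  -- integrable on Ioc
  have hF_int : ∀ n : ℕ, Integrable (F n) (volume.restrict (Ioc 0 t)) := fun n =>
    (intervalIntegrable_iff_integrableOn_Ioc_of_le ht).mp (hint n)
  -- summability of the values
  have hsum0 : Summable (fun n : ℕ => x ^ n / Real.Gamma ((n : ℝ) / 2 + 1)) :=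
    ml_summable hx
  have hsum1 : Summable (fun n : ℕ => x ^ (n+1) / Real.Gamma (((n:ℝ)+1)/2 + 1)) := by
    refine ((summable_nat_add_iff (f := fun n : ℕ => x ^ n / Real.Gamma ((n : ℝ) / 2 + 1))
      1).mpr hsum0).congr fun n => ?_
    push_cast; ring_nf
  -- norms of integrals
  have hnorm : ∀ n : ℕ, (∫ s in Ioc (0:ℝ) t, ‖F n s‖)
      = x ^ (n+1) / Real.Gamma (((n:ℝ)+1)/2 + 1) := by
    intro n
    rw [← hval n, intervalIntegral.integral_of_le ht]
    apply setIntegral_congr_fun measurableSet_Ioc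
    intro s hs
    exact Real.norm_of_nonneg (hFnn n s hs)
  have hF_sum : Summable fun n : ℕ => ∫ s in Ioc (0:ℝ) t, ‖F n s‖ := by
    refine hsum1.congr fun n => ?_
    exact (hnorm n).symm
  have swap := MeasureTheory.integral_tsum_of_summable_integral_norm
    (μ := volume.restrict (Ioc (0:ℝ) t)) hF_int hF_sum
  constructor
  · rw [intervalIntegral.integral_of_le ht, ← swap]
    refine tsum_congr fun n => ?_
    rw [← intervalIntegral.integral_of_le ht]
    exact hval n
  · have h0 := Summable.tsum_eq_zero_add hsum0
    have hf0 : x ^ 0 / Real.Gamma (((0:ℕ) : ℝ) / 2 + 1) = 1 := by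
      norm_num [Real.Gamma_one]
    rw [hf0] at h0
    have hshift : (∑' n : ℕ, x ^ (n+1) / Real.Gamma ((((n+1 : ℕ)):ℝ)/2 + 1))
        = ∑' n : ℕ, x ^ (n+1) / Real.Gamma (((n:ℝ)+1)/2 + 1) := by
      refine tsum_congr fun n => ?_
      push_cast; ring_nf
    rw [hshift] at h0
    linarith [h0]
end

section
/- For every c ≥ 0, μ ∈ ℝ and t ≥ 0, the following exchange-of-integration identity holds: ∫₀ᵗ ( Σ_{n=1}^∞ (cⁿ / Γ(n/2)) · (t − s)^{n/2 − 1} ) · ( ∫₀ˢ (s − τ)^{−1/2} e^{μ τ} dτ ) ds = Γ(1/2) · ∫₀ᵗ ( Σ_{n=1}^∞ (cⁿ / Γ((n+1)/2)) · (t − τ)^{(n−1)/2} ) e^{μ τ} dτ. -/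
/-!
All integrands are nonnegative, so in `ℝ≥0∞` both series may be integrated term by term and
the order of integration over the triangle `0 < τ ≤ s ≤ t` may be exchanged (Tonelli). With
`α = (n + 1) / 2`, the inner `s`-integral of the `n`-th term is then a Beta integral,
`∫_τ^t (t - s)^(α - 1) (s - τ)^(-1/2) ds = B(α, 1/2) (t - τ)^(α - 1/2)`, and
`B(α, 1/2) / Γ(α) = Γ(1/2) / Γ(α + 1/2)` turns it into the `n`-th term of the right-hand side.
Both series converge because `Γ((n + 1) / 2)` grows like `⌊n / 2⌋!`.
-/

open MeasureTheory Set Real Function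
open scoped ENNReal

theorem summable_pow_div_Gamma_add_one_div_two {q : ℝ} (hq : 0 ≤ q) :
    Summable fun n : ℕ => q ^ n / Gamma (((n : ℝ) + 1) / 2) := by
  refine Summable.even_add_odd ?_ ?_
  · rw [← summable_nat_add_iff 2]
    have hexp : Summable fun k : ℕ => q ^ 2 * ((q ^ 2) ^ (k + 1) / (k + 1).factorial) :=
      ((summable_nat_add_iff 1).2 (Real.summable_pow_div_factorial (q ^ 2))).mul_left _
    refine hexp.of_nonneg_of_le (fun k => by positivity) fun k => ?_
    -- `Γ` is monotone on `[2, ∞)`, so `Γ(k + 5/2) ≥ Γ(k + 2) = (k + 1)!`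
    have hΓ : ((k + 1).factorial : ℝ) ≤ Gamma ((((2 * (k + 2) : ℕ) : ℝ) + 1) / 2) := by
      rw [← Gamma_nat_eq_factorial]
      refine Gamma_strictMonoOn_Ici.monotoneOn (mem_Ici.2 ?_) (mem_Ici.2 ?_) ?_ <;> push_cast <;>
        linarith [(k.cast_nonneg : (0 : ℝ) ≤ k)]
    calc q ^ (2 * (k + 2)) / Gamma ((((2 * (k + 2) : ℕ) : ℝ) + 1) / 2)
        ≤ q ^ (2 * (k + 2)) / (k + 1).factorial := by gcongr
      _ = q ^ 2 * ((q ^ 2) ^ (k + 1) / (k + 1).factorial) := by ring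
  · refine ((Real.summable_pow_div_factorial (q ^ 2)).mul_left q).congr fun k => ?_
    rw [show (((2 * k + 1 : ℕ) : ℝ) + 1) / 2 = k + 1 by push_cast; ring, Gamma_nat_eq_factorial]
    ring

theorem rpow_half_sub_half_eq {x : ℝ} (hx : 0 < x) (k : ℕ) :
    x ^ ((k : ℝ) / 2 - 1 / 2) = x ^ (-(1 : ℝ) / 2) * √x ^ k := by
  rw [sqrt_eq_rpow, ← rpow_natCast, ← rpow_mul hx.le, ← rpow_add hx]
  ring_nf

theorem summable_pow_div_Gamma_mul_rpow {c x : ℝ} (hc : 0 ≤ c) (hx : 0 < x) :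
    Summable fun n : ℕ =>
      c ^ (n + 1) / Gamma (((n : ℝ) + 1) / 2) * x ^ (((n : ℝ) + 1) / 2 - 1) := by
  refine ((summable_pow_div_Gamma_add_one_div_two (q := c * √x) (by positivity)).mul_left
    (c * x ^ (-(1 : ℝ) / 2))).congr fun n => ?_
  rw [show ((n : ℝ) + 1) / 2 - 1 = n / 2 - 1 / 2 by ring, rpow_half_sub_half_eq hx]
  ring

theorem summable_pow_div_Gamma_succ_mul_rpow {c x : ℝ} (hc : 0 ≤ c) (hx : 0 < x) :
    Summable fun n : ℕ =>
      c ^ (n + 1) / Gamma (((n : ℝ) + 1 + 1) / 2) * x ^ (((n : ℝ) + 1 - 1) / 2) := by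
  refine (((summable_nat_add_iff 1).2 (summable_pow_div_Gamma_add_one_div_two
    (q := c * √x) (by positivity))).mul_left (x ^ (-(1 : ℝ) / 2))).congr fun n => ?_
  rw [show ((n : ℝ) + 1 - 1) / 2 = ((n + 1 : ℕ) : ℝ) / 2 - 1 / 2 by push_cast; ring,
    rpow_half_sub_half_eq hx, Nat.cast_succ]
  ring

theorem integral_rpow_mul_sub_rpow {a b A : ℝ} (ha : 0 < a) (hb : 0 < b) (hA : 0 < A) :
    ∫ x in 0..A, x ^ (a - 1) * (A - x) ^ (b - 1)
      = A ^ (a + b - 1) * ProbabilityTheory.beta a b := by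
  have hcpx : ∫ x in 0..A, (x : ℂ) ^ ((a : ℂ) - 1) * ((A : ℂ) - x) ^ ((b : ℂ) - 1)
      = ((∫ x in 0..A, x ^ (a - 1) * (A - x) ^ (b - 1) : ℝ) : ℂ) := by
    rw [← intervalIntegral.integral_ofReal]
    refine intervalIntegral.integral_congr fun x hx => ?_
    rw [uIcc_of_le hA.le] at hx
    push_cast
    rw [Complex.ofReal_cpow hx.1, Complex.ofReal_cpow (sub_nonneg.2 hx.2)]
    push_cast
    ring_nf
  have := congrArg Complex.re ((Complex.betaIntegral_scaled a b hA).symm.trans hcpx)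
  rw [Complex.ofReal_re, show (a : ℂ) + b - 1 = ((a + b - 1 : ℝ) : ℂ) by push_cast; ring,
    ← Complex.ofReal_cpow hA.le, Complex.re_ofReal_mul] at this
  rw [ProbabilityTheory.beta_eq_betaIntegralReal a b ha hb, this]

theorem lintegral_sub_rpow_mul_sub_rpow_s10 {a b τ t : ℝ} (ha : 0 < a) (hb : 0 < b)
    (hτt : τ < t) :
    ∫⁻ s in Icc τ t, ENNReal.ofReal ((t - s) ^ (a - 1) * (s - τ) ^ (b - 1))
      = ENNReal.ofReal ((t - τ) ^ (a + b - 1) * ProbabilityTheory.beta a b) := by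
  have hint : ∫ s in τ..t, (t - s) ^ (a - 1) * (s - τ) ^ (b - 1)
      = (t - τ) ^ (a + b - 1) * ProbabilityTheory.beta a b := by
    have := intervalIntegral.integral_comp_sub_left
      (fun x => x ^ (a - 1) * (t - τ - x) ^ (b - 1)) t (a := τ) (b := t)
    simp only [sub_self, sub_sub_sub_cancel_left] at this
    rw [← integral_rpow_mul_sub_rpow ha hb (sub_pos.2 hτt), ← this]
  have hpos : 0 < (t - τ) ^ (a + b - 1) * ProbabilityTheory.beta a b :=
    mul_pos (rpow_pos_of_pos (sub_pos.2 hτt) _) (ProbabilityTheory.beta_pos ha hb)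
  rw [intervalIntegral.integral_of_le hτt.le, ← integral_Icc_eq_integral_Ioc] at hint
  rw [← hint, ofReal_integral_eq_lintegral_ofReal]
  · exact Integrable.of_integral_ne_zero (hint ▸ hpos.ne')
  · filter_upwards [ae_restrict_mem measurableSet_Icc] with s hs
    exact mul_nonneg (rpow_nonneg (sub_nonneg.2 hs.2) _) (rpow_nonneg (sub_nonneg.2 hs.1) _)

theorem lintegral_Ioc_lintegral_Ioc_swap {μ ν : Measure ℝ} [SFinite μ] [SFinite ν]
    {F : ℝ → ℝ → ℝ≥0∞} (hF : Measurable (uncurry F)) (a b : ℝ) :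
    ∫⁻ s in Ioc a b, ∫⁻ τ in Ioc a s, F s τ ∂ν ∂μ
      = ∫⁻ τ in Ioc a b, ∫⁻ s in Icc τ b, F s τ ∂μ ∂ν := by
  set T : Set (ℝ × ℝ) := {p | a < p.2 ∧ p.2 ≤ p.1 ∧ p.1 ≤ b}
  have hT : MeasurableSet T :=
    (measurableSet_lt measurable_const measurable_snd).inter
      ((measurableSet_le measurable_snd measurable_fst).inter
        (measurableSet_le measurable_fst measurable_const))
  have hslice_fst : ∀ s, ∫⁻ τ, T.indicator (uncurry F) (s, τ) ∂ν
      = (Ioc a b).indicator (fun s => ∫⁻ τ in Ioc a s, F s τ ∂ν) s := by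
    intro s
    by_cases hs : s ∈ Ioc a b
    · rw [indicator_of_mem hs, ← lintegral_indicator measurableSet_Ioc]
      congr 1 with τ
      simp only [T, indicator_apply, mem_ofPred_eq, mem_Ioc, uncurry_apply_pair]
      grind
    · rw [indicator_of_notMem hs, ← lintegral_zero]
      congr 1 with τ
      simp only [T, indicator_apply, mem_ofPred_eq, uncurry_apply_pair]
      grind
  have hslice_snd : ∀ τ, ∫⁻ s, T.indicator (uncurry F) (s, τ) ∂μ
      = (Ioc a b).indicator (fun τ => ∫⁻ s in Icc τ b, F s τ ∂μ) τ := by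
    intro τ
    by_cases hτ : τ ∈ Ioc a b
    · rw [indicator_of_mem hτ, ← lintegral_indicator measurableSet_Icc]
      congr 1 with s
      simp only [T, indicator_apply, mem_ofPred_eq, mem_Icc, uncurry_apply_pair]
      grind
    · rw [indicator_of_notMem hτ, ← lintegral_zero]
      congr 1 with s
      simp only [T, indicator_apply, mem_ofPred_eq, uncurry_apply_pair]
      grind
  rw [← lintegral_indicator measurableSet_Ioc, ← lintegral_indicator measurableSet_Ioc]
  simp only [← hslice_fst, ← hslice_snd]
  exact lintegral_lintegral_swap ((hF.indicator hT).comp measurable_id).aemeasurable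

theorem ae_restrict_Ioc_mem_Ioo {μ : Measure ℝ} [NullSingletonClass μ] (a b : ℝ) :
    ∀ᵐ x ∂μ.restrict (Ioc a b), x ∈ Ioo a b := by
  rw [← Measure.restrict_congr_set Ioo_ae_eq_Ioc]
  exact ae_restrict_mem measurableSet_Ioo

/-- The semigroup law `I^α I^β = B(α, β) I^(α + β)` of Riemann–Liouville integrals. -/
theorem lintegral_sub_rpow_mul_lintegral_sub_rpow_mul {α β a t : ℝ} (hα : 0 < α)
    (hβ : 0 < β) {e : ℝ → ℝ≥0∞} (he : Measurable e) :
    ∫⁻ s in Ioc a t, ENNReal.ofReal ((t - s) ^ (α - 1)) *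
        ∫⁻ τ in Ioc a s, ENNReal.ofReal ((s - τ) ^ (β - 1)) * e τ
      = ENNReal.ofReal (ProbabilityTheory.beta α β) *
          ∫⁻ τ in Ioc a t, ENNReal.ofReal ((t - τ) ^ (α + β - 1)) * e τ := by
  calc _ = ∫⁻ s in Ioc a t, ∫⁻ τ in Ioc a s,
          ENNReal.ofReal ((t - s) ^ (α - 1)) * (ENNReal.ofReal ((s - τ) ^ (β - 1)) * e τ) := by
        congr 1 with s
        exact (lintegral_const_mul' _ _ ENNReal.ofReal_ne_top).symm
    _ = ∫⁻ τ in Ioc a t, ∫⁻ s in Icc τ t,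
          ENNReal.ofReal ((t - s) ^ (α - 1)) * (ENNReal.ofReal ((s - τ) ^ (β - 1)) * e τ) :=
        lintegral_Ioc_lintegral_Ioc_swap (by unfold uncurry; fun_prop) a t
    _ = ∫⁻ τ in Ioc a t, ENNReal.ofReal (ProbabilityTheory.beta α β) *
          (ENNReal.ofReal ((t - τ) ^ (α + β - 1)) * e τ) := by
        refine lintegral_congr_ae ?_
        filter_upwards [ae_restrict_Ioc_mem_Ioo a t] with τ hτ
        calc _ = ∫⁻ s in Icc τ t,
              ENNReal.ofReal ((t - s) ^ (α - 1) * (s - τ) ^ (β - 1)) * e τ := by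
              refine setLIntegral_congr_fun measurableSet_Icc fun s hs => ?_
              rw [ENNReal.ofReal_mul (rpow_nonneg (sub_nonneg.2 hs.2) _), mul_assoc]
          _ = _ := by
              rw [lintegral_mul_const _ (by fun_prop),
                lintegral_sub_rpow_mul_sub_rpow_s10 hα hβ hτ.2,
                ENNReal.ofReal_mul (rpow_nonneg (sub_nonneg.2 hτ.2.le) _)]
              ring
    _ = _ := lintegral_const_mul' _ _ ENNReal.ofReal_ne_top

theorem integral_tsum_mul_eq_toReal_tsum_lintegral {X ι : Type*} [MeasurableSpace X]
    [Countable ι] {μ : Measure X} {f : ι → X → ℝ} {g : X → ℝ}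
    (hf : ∀ i, AEMeasurable (f i) μ) (hg : AEMeasurable g μ) (hf_nonneg : ∀ i, 0 ≤ᵐ[μ] f i)
    (hg_nonneg : 0 ≤ᵐ[μ] g) (hf_sum : ∀ᵐ x ∂μ, Summable fun i => f i x) :
    ∫ x, (∑' i, f i x) * g x ∂μ
      = (∑' i, ∫⁻ x, ENNReal.ofReal (f i x) * ENNReal.ofReal (g x) ∂μ).toReal := by
  have hf_nonneg' : ∀ᵐ x ∂μ, ∀ i, 0 ≤ f i x := ae_all_iff.2 hf_nonneg
  have hm : AEStronglyMeasurable (fun x => (∑' i, f i x) * g x) μ :=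
    ((AEMeasurable.tsum hf).mul hg).aestronglyMeasurable
  rw [integral_eq_lintegral_of_nonneg_ae ?_ hm,
    ← lintegral_tsum (f := fun i x => ENNReal.ofReal (f i x) * ENNReal.ofReal (g x))
      fun i => (hf i).ennreal_ofReal.mul hg.ennreal_ofReal]
  · congr 1
    refine lintegral_congr_ae ?_
    filter_upwards [hf_nonneg', hg_nonneg, hf_sum] with x hfx hgx hsx
    rw [ENNReal.ofReal_mul (tsum_nonneg hfx), ENNReal.ofReal_tsum_of_nonneg hfx hsx,
      ENNReal.tsum_mul_right]
  · filter_upwards [hf_nonneg', hg_nonneg] with x hfx hgx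
    exact mul_nonneg (tsum_nonneg hfx) hgx

theorem continuous_integral_sub_rpow_mul_exp {r : ℝ} (hr : -1 < r) (μ : ℝ) :
    Continuous fun s => ∫ τ in (0 : ℝ)..s, (s - τ) ^ r * exp (μ * τ) := by
  have hconv : ∀ s, ∫ τ in (0 : ℝ)..s, (s - τ) ^ r * exp (μ * τ)
      = exp (μ * s) * ∫ u in (0 : ℝ)..s, u ^ r * exp (-(μ * u)) := by
    intro s
    have := intervalIntegral.integral_comp_sub_left (fun u => u ^ r * exp (μ * (s - u))) s
      (a := 0) (b := s)
    simp only [sub_sub_cancel, sub_self, sub_zero] at this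
    rw [this, ← intervalIntegral.integral_const_mul]
    congr 1 with u
    rw [mul_sub, sub_eq_add_neg, exp_add]
    ring
  simp only [hconv]
  exact (by fun_prop : Continuous fun s => exp (μ * s)).mul
    (intervalIntegral.continuous_primitive (fun _ _ =>
      (intervalIntegral.intervalIntegrable_rpow' hr).mul_continuousOn (by fun_prop)) 0)

theorem ofReal_integral_sub_rpow_mul {r a s : ℝ} (hr : -1 < r) (has : a ≤ s) {e : ℝ → ℝ}
    (he : Continuous e) (he_nonneg : ∀ τ, 0 ≤ e τ) :
    ENNReal.ofReal (∫ τ in a..s, (s - τ) ^ r * e τ)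
      = ∫⁻ τ in Ioc a s, ENNReal.ofReal ((s - τ) ^ r) * ENNReal.ofReal (e τ) := by
  have hpow : IntervalIntegrable (fun τ => (s - τ) ^ r) volume a s := by
    have := (intervalIntegral.intervalIntegrable_rpow' hr (a := 0) (b := s - a)).comp_sub_left s
    simpa only [sub_zero, sub_sub_cancel] using this.symm
  rw [intervalIntegral.integral_of_le has,
    ofReal_integral_eq_lintegral_ofReal (hpow.mul_continuousOn he.continuousOn).1]
  · refine setLIntegral_congr_fun measurableSet_Ioc fun τ hτ => ?_
    exact ENNReal.ofReal_mul (rpow_nonneg (sub_nonneg.2 hτ.2) _)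
  · filter_upwards [ae_restrict_mem measurableSet_Ioc] with τ hτ
    exact mul_nonneg (rpow_nonneg (sub_nonneg.2 hτ.2) _) (he_nonneg τ)

theorem lintegral_pow_div_Gamma_mul_rpow_mul_integral {c : ℝ} (hc : 0 ≤ c) (μ t : ℝ)
    (n : ℕ) :
    ∫⁻ s in Ioc 0 t,
        ENNReal.ofReal (c ^ (n + 1) / Gamma (((n : ℝ) + 1) / 2) *
          (t - s) ^ (((n : ℝ) + 1) / 2 - 1)) *
        ENNReal.ofReal (∫ τ in (0 : ℝ)..s, (s - τ) ^ (-(1 : ℝ) / 2) * exp (μ * τ))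
      = ENNReal.ofReal (Gamma (1 / 2)) * ∫⁻ τ in Ioc 0 t,
          ENNReal.ofReal (c ^ (n + 1) / Gamma (((n : ℝ) + 1 + 1) / 2) *
            (t - τ) ^ (((n : ℝ) + 1 - 1) / 2)) * ENNReal.ofReal (exp (μ * τ)) := by
  set α : ℝ := ((n : ℝ) + 1) / 2
  have hα : 0 < α := by positivity
  have hcoef : c ^ (n + 1) / Gamma α * ProbabilityTheory.beta α (1 / 2)
      = Gamma (1 / 2) * (c ^ (n + 1) / Gamma (((n : ℝ) + 1 + 1) / 2)) := by
    rw [ProbabilityTheory.beta, show α + 1 / 2 = ((n : ℝ) + 1 + 1) / 2 by ring]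
    field_simp [(Gamma_pos_of_pos hα).ne']
  have ha_nonneg : 0 ≤ c ^ (n + 1) / Gamma α := by positivity
  calc _ = ∫⁻ s in Ioc 0 t, ENNReal.ofReal (c ^ (n + 1) / Gamma α) *
          (ENNReal.ofReal ((t - s) ^ (α - 1)) * ∫⁻ τ in Ioc 0 s,
            ENNReal.ofReal ((s - τ) ^ ((1 : ℝ) / 2 - 1)) * ENNReal.ofReal (exp (μ * τ))) := by
        refine setLIntegral_congr_fun measurableSet_Ioc fun s hs => ?_
        rw [ENNReal.ofReal_mul ha_nonneg, ofReal_integral_sub_rpow_mul (by norm_num) hs.1.le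
          (by fun_prop) fun τ => (exp_pos _).le, mul_assoc]
        norm_num
    _ = ENNReal.ofReal (c ^ (n + 1) / Gamma α * ProbabilityTheory.beta α (1 / 2)) *
          ∫⁻ τ in Ioc 0 t, ENNReal.ofReal ((t - τ) ^ (α + 1 / 2 - 1)) *
            ENNReal.ofReal (exp (μ * τ)) := by
        rw [lintegral_const_mul' _ _ ENNReal.ofReal_ne_top,
          lintegral_sub_rpow_mul_lintegral_sub_rpow_mul hα (by norm_num) (by fun_prop),
          ENNReal.ofReal_mul ha_nonneg, mul_assoc]
    _ = _ := by
        rw [hcoef, ENNReal.ofReal_mul (Gamma_pos_of_pos (by norm_num)).le, mul_assoc,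
          ← lintegral_const_mul' _ _ ENNReal.ofReal_ne_top]
        congr 2 with τ
        rw [← mul_assoc, ← ENNReal.ofReal_mul (by positivity),
          show α + 1 / 2 - 1 = ((n : ℝ) + 1 - 1) / 2 by ring]

/-- Exchange-of-integration identity (Fubini plus the Beta-function evaluation
`∫_τ^t (t−s)^{n/2−1} (s−τ)^{−1/2} ds = (t−τ)^{(n+1)/2−1} Γ(n/2) Γ(1/2)/Γ((n+1)/2)`):
for `c ≥ 0`, `μ ∈ ℝ`, `t ≥ 0`,
`∫₀ᵗ (Σ_{n≥1} (cⁿ/Γ(n/2)) (t−s)^{n/2−1}) (∫₀ˢ (s−τ)^{−1/2} e^{μτ} dτ) ds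
  = Γ(1/2) ∫₀ᵗ (Σ_{n≥1} (cⁿ/Γ((n+1)/2)) (t−τ)^{(n−1)/2}) e^{μτ} dτ`. -/
theorem exchange_integration_identity
    (c μ t : ℝ) (hc : 0 ≤ c) (ht : 0 ≤ t) :
    (∫ s in (0:ℝ)..t,
        (∑' n : ℕ, (c ^ (n + 1) / Real.Gamma (((n : ℝ) + 1) / 2)) *
            (t - s) ^ (((n : ℝ) + 1) / 2 - 1)) *
          (∫ τ in (0:ℝ)..s, (s - τ) ^ (-(1:ℝ)/2) * Real.exp (μ * τ)))
      = Real.Gamma (1/2) *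
        ∫ τ in (0:ℝ)..t,
          (∑' n : ℕ, (c ^ (n + 1) / Real.Gamma (((n : ℝ) + 1 + 1) / 2)) *
              (t - τ) ^ (((n : ℝ) + 1 - 1) / 2)) *
            Real.exp (μ * τ) := by
  have hae := ae_restrict_Ioc_mem_Ioo (μ := volume) 0 t
  have hkernel := continuous_integral_sub_rpow_mul_exp (r := -(1 : ℝ) / 2) (by norm_num) μ
  rw [intervalIntegral.integral_of_le ht, intervalIntegral.integral_of_le ht,
    integral_tsum_mul_eq_toReal_tsum_lintegral (fun n => by fun_prop)
      hkernel.measurable.aemeasurable ?f_nonneg ?G_nonneg ?f_sum,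
    integral_tsum_mul_eq_toReal_tsum_lintegral (fun n => by fun_prop) (by fun_prop) ?g_nonneg
      (ae_of_all _ fun τ => (exp_pos _).le) ?g_sum,
    ← ENNReal.toReal_ofReal (Gamma_pos_of_pos one_half_pos).le, ← ENNReal.toReal_mul,
    ← ENNReal.tsum_mul_left]
  · exact congrArg ENNReal.toReal
      (tsum_congr (lintegral_pow_div_Gamma_mul_rpow_mul_integral hc μ t))
  case f_nonneg | g_nonneg =>
    exact fun n => hae.mono fun s hs =>
      mul_nonneg (by positivity) (rpow_nonneg (by linarith [hs.2]) _)
  case G_nonneg =>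
    exact hae.mono fun s hs => intervalIntegral.integral_nonneg hs.1.le
      fun τ hτ => mul_nonneg (rpow_nonneg (by linarith [hτ.2]) _) (exp_pos _).le
  case f_sum => exact hae.mono fun s hs => summable_pow_div_Gamma_mul_rpow hc (sub_pos.2 hs.2)
  case g_sum =>
    exact hae.mono fun s hs => summable_pow_div_Gamma_succ_mul_rpow hc (sub_pos.2 hs.2)
end

section
/- Let H be a real Hilbert space with a Hilbert (complete orthonormal) basis (e_i)_{i ≥ 1}, let A be a bounded self-adjoint linear operator on H with A e_i = μ_i e_i for a bounded sequence of reals (μ_i), let π be the orthogonal projection onto the span of e₁ and π⊥ = I − π, and for δ > 0 set Q_δ(v, w) = δ ⟨π v, π w⟩ − ⟨π⊥ v, π⊥ w⟩ and Q_δ(v) = Q_δ(v, v). Let ε ≥ 0 and let B be a bounded linear operator on H with operator norm ‖B‖ ≤ ε. Assume the gap condition ε (1 + δ) ≤ μ₁ − μ_i − ε (1 + δ)/δ for every i ≥ 2. Then for every v ∈ H, setting w = A v + B v, one has Q_δ(v, w) ≥ ( μ₁ − ε (1 + δ)/δ ) · Q_δ(v). (Along a solution of v′ = A v + B v this reads (1/2)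 d/dt Q_δ(v(t)) ≥ (μ₁ − ε(1+δ)/δ) Q_δ(v(t)), yielding invariance and expansion of the cone {Q_δ ≥ 0}.) -/
open scoped RealInnerProductSpace

/-- The orthogonal projection of `v` onto the span of the unit vector `e₁`. -/
noncomputable def projLine {H : Type*} [NormedAddCommGroup H] [InnerProductSpace ℝ H]
    (e₁ v : H) : H :=
  ⟪e₁, v⟫ • e₁

/-- The bilinear form `Q_δ(v, w) = δ ⟪π v, π w⟫ − ⟪π⊥ v, π⊥ w⟫`, where `π` is the
orthogonal projection onto the span of the unit vector `e₁` and `π⊥ = I − π`. -/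
noncomputable def coneForm {H : Type*} [NormedAddCommGroup H] [InnerProductSpace ℝ H]
    (e₁ : H) (δ : ℝ) (v w : H) : ℝ :=
  δ * ⟪projLine e₁ v, projLine e₁ w⟫ - ⟪v - projLine e₁ v, w - projLine e₁ w⟫

set_option maxHeartbeats 1000000 in
/-- Cone invariance and expansion estimate: if `A` is bounded self-adjoint with
`A eᵢ = μᵢ eᵢ` for a complete orthonormal system `(eᵢ)` and a bounded sequence `(μᵢ)`,
`‖B‖ ≤ ε`, and the spectral-gap condition `ε (1+δ) ≤ μ₁ − μᵢ − ε (1+δ)/δ` holds for all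
`i ≥ 2`, then for every `v`, with `w = A v + B v`,
`Q_δ(v, w) ≥ (μ₁ − ε (1+δ)/δ) Q_δ(v)`.  (Here the indexing starts at `0`, so `e 0`
plays the role of `e₁`.) -/
theorem cone_invariance_expansion
    {H : Type*} [NormedAddCommGroup H] [InnerProductSpace ℝ H] [CompleteSpace H]
    (e : ℕ → H) (he : Orthonormal ℝ e)
    (he_complete : (Submodule.span ℝ (Set.range e)).topologicalClosure = ⊤)
    (A : H →L[ℝ] H)
    (hA_sa : ∀ v w : H, ⟪A v, w⟫ = ⟪v, A w⟫)
    (μ : ℕ → ℝ) (hμ_bdd : ∃ C : ℝ, ∀ i : ℕ, |μ i| ≤ C)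
    (hAe : ∀ i : ℕ, A (e i) = μ i • e i)
    (ε : ℝ) (hε : 0 ≤ ε) (B : H →L[ℝ] H) (hB : ‖B‖ ≤ ε)
    (δ : ℝ) (hδ : 0 < δ)
    (hgap : ∀ i : ℕ, 1 ≤ i → ε * (1 + δ) ≤ μ 0 - μ i - ε * (1 + δ) / δ) :
    ∀ v : H, coneForm (e 0) δ v (A v + B v)
      ≥ (μ 0 - ε * (1 + δ) / δ) * coneForm (e 0) δ v v := by
  intro v
  obtain ⟨C, hC⟩ := hμ_bdd
  set b : HilbertBasis ℕ ℝ H := HilbertBasis.mk he he_complete.ge with hb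
  have hbe : ∀ i, b i = e i := fun i => by rw [hb, HilbertBasis.coe_mk]
  have he0 : ‖e 0‖ = 1 := he.1 0
  set c : ℝ := ⟪e 0, v⟫ with hc
  set p : H := projLine (e 0) v with hp
  set q : H := v - p with hq
  have hpq : p + q = v := by rw [hq]; abel
  -- basic inner products
  have he00 : ⟪e 0, e 0⟫ = (1 : ℝ) := by
    rw [real_inner_self_eq_norm_sq, he0]; norm_num
  have hqe0 : ⟪e 0, q⟫ = 0 := by
    rw [hq, hp, projLine, inner_sub_right, real_inner_smul_right, he00]
    ring
  have hqe0' : ⟪q, e 0⟫ = 0 := by rw [real_inner_comm]; exact hqe0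
  have hpq0 : ⟪p, q⟫ = 0 := by
    rw [hp, projLine, real_inner_smul_left, hqe0]; ring
  have hqp0 : ⟪q, p⟫ = 0 := by rw [real_inner_comm]; exact hpq0
  have hpv : ⟪p, v⟫ = c ^ 2 := by
    rw [hp, projLine, real_inner_smul_left, ← hc]; ring
  have hnp : ‖p‖ ^ 2 = c ^ 2 := by
    rw [hp, projLine, norm_smul, mul_pow, he0, Real.norm_eq_abs, sq_abs, ← hc]
    ring
  have hpp : ⟪p, p⟫ = c ^ 2 := by rw [real_inner_self_eq_norm_sq, hnp]
  have hnv : ‖v‖ ^ 2 = c ^ 2 + ‖q‖ ^ 2 := by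
    rw [← hpq, norm_add_sq_real, hpq0, hnp]
    ring
  -- A p = μ 0 • p
  have hAp : A p = μ 0 • p := by
    rw [hp, projLine, map_smul, hAe, smul_comm]
  -- coneForm as a single inner product
  have hcone : ∀ w : H, coneForm (e 0) δ v w = ⟪δ • p - q, w⟫ := by
    intro w
    have h1 : ⟪p, projLine (e 0) w⟫ = ⟪p, w⟫ := by
      rw [hp, projLine, projLine, real_inner_smul_left, real_inner_smul_left,
        real_inner_smul_right, he00]
      ring
    have h2 : ⟪q, projLine (e 0) w⟫ = 0 := by
      rw [projLine, real_inner_smul_right, hqe0']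
      ring
    have key1 : ⟪v - p, w - projLine (e 0) w⟫ = ⟪q, w⟫ := by
      rw [← hq, inner_sub_right, h2, sub_zero]
    have expand : coneForm (e 0) δ v w = δ * ⟪p, projLine (e 0) w⟫ - ⟪q, w⟫ := by
      rw [coneForm, ← hp, key1]
    rw [expand, h1, inner_sub_left (δ • p) q w, real_inner_smul_left p w δ]
  have hqv : ⟪q, v⟫ = ‖q‖ ^ 2 := by
    rw [← hpq, inner_add_right, hqp0, real_inner_self_eq_norm_sq, zero_add]
  have hQvv : coneForm (e 0) δ v v = δ * c ^ 2 - ‖q‖ ^ 2 := by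
    rw [hcone v, inner_sub_left, real_inner_smul_left p v δ, hpv, hqv]
  -- the A part
  have hpAv : ⟪p, A v⟫ = μ 0 * c ^ 2 := by
    rw [← hA_sa, hAp, real_inner_smul_left, hpv]
  have hqAv : ⟪q, A v⟫ = ⟪A q, q⟫ := by
    rw [← hA_sa, ← hpq, inner_add_right, hA_sa q p, hAp, real_inner_smul_right, hqp0]
    ring
  -- spectral bound : ⟪A q, q⟫ ≤ (μ 0 - κ) * ‖q‖²
  set κ : ℝ := ε * (1 + δ) + ε * (1 + δ) / δ with hκ
  have hAqq : ⟪A q, q⟫ ≤ (μ 0 - κ) * ‖q‖ ^ 2 := by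
    have hsum1 : ∑' i, ⟪A q, b i⟫ * ⟪b i, q⟫ = ⟪A q, q⟫ := b.tsum_inner_mul_inner _ _
    have hsum2 : ∑' i, ⟪q, b i⟫ * ⟪b i, q⟫ = ‖q‖ ^ 2 := by
      rw [b.tsum_inner_mul_inner, real_inner_self_eq_norm_sq]
    have hterm : ∀ i, ⟪A q, b i⟫ * ⟪b i, q⟫ = μ i * (⟪b i, q⟫ * ⟪b i, q⟫) := by
      intro i
      rw [hbe, hA_sa, hAe, real_inner_smul_right, real_inner_comm]
      ring
    have hsq : Summable fun i => ⟪q, b i⟫ * ⟪b i, q⟫ := b.summable_inner_mul_inner q q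
    have hsq' : Summable fun i => ⟪b i, q⟫ * ⟪b i, q⟫ := by
      convert hsq using 2 with i
      rw [real_inner_comm]
    have hsA : Summable fun i => ⟪A q, b i⟫ * ⟪b i, q⟫ := b.summable_inner_mul_inner _ _
    have hle : ∀ i, ⟪A q, b i⟫ * ⟪b i, q⟫ ≤ (μ 0 - κ) * (⟪b i, q⟫ * ⟪b i, q⟫) := by
      intro i
      rw [hterm]
      rcases Nat.eq_zero_or_pos i with h0 | h1
      · subst h0
        rw [hbe, hqe0]
        simp
      · have := hgap i h1
        have hμi : μ i ≤ μ 0 - κ := by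
          rw [hκ]; linarith
        have hsqnn : 0 ≤ ⟪b i, q⟫ * ⟪b i, q⟫ := mul_self_nonneg _
        exact mul_le_mul_of_nonneg_right hμi hsqnn
    calc ⟪A q, q⟫ = ∑' i, ⟪A q, b i⟫ * ⟪b i, q⟫ := hsum1.symm
      _ ≤ ∑' i, (μ 0 - κ) * (⟪b i, q⟫ * ⟪b i, q⟫) := Summable.tsum_le_tsum hle hsA (hsq'.mul_left _)
      _ = (μ 0 - κ) * ‖q‖ ^ 2 := by
          rw [tsum_mul_left]
          congr 1
          rw [← hsum2]
          exact tsum_congr fun i => by rw [real_inner_comm]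
  -- the B part
  have hnu : ‖δ • p - q‖ ^ 2 = δ ^ 2 * c ^ 2 + ‖q‖ ^ 2 := by
    rw [norm_sub_sq_real, real_inner_smul_left, hpq0, norm_smul, mul_pow,
      Real.norm_eq_abs, sq_abs, hnp]
    ring
  have hBv : ⟪δ • p - q, B v⟫ ≥ -(ε * (1 + δ) * (c ^ 2 + ‖q‖ ^ 2)) := by
    have h1 : |⟪δ • p - q, B v⟫| ≤ ‖δ • p - q‖ * ‖B v‖ := abs_real_inner_le_norm _ _
    have h2 : ‖B v‖ ≤ ε * ‖v‖ :=
      le_trans (B.le_opNorm v) (mul_le_mul_of_nonneg_right hB (norm_nonneg v))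
    have h3 : ‖δ • p - q‖ ≤ (1 + δ) * ‖v‖ := by
      have h4 : ‖δ • p - q‖ ^ 2 ≤ ((1 + δ) * ‖v‖) ^ 2 := by
        rw [hnu, mul_pow, hnv]
        nlinarith [sq_nonneg c, sq_nonneg (‖q‖), hδ.le]
      have h5 : 0 ≤ (1 + δ) * ‖v‖ := by positivity
      nlinarith [norm_nonneg (δ • p - q)]
    have h6 : ‖δ • p - q‖ * ‖B v‖ ≤ ε * (1 + δ) * (c ^ 2 + ‖q‖ ^ 2) := by
      calc ‖δ • p - q‖ * ‖B v‖ ≤ ((1 + δ) * ‖v‖) * (ε * ‖v‖) := by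
            apply mul_le_mul h3 h2 (norm_nonneg _) (by positivity)
        _ = ε * (1 + δ) * ‖v‖ ^ 2 := by ring
        _ = ε * (1 + δ) * (c ^ 2 + ‖q‖ ^ 2) := by rw [hnv]
    have := neg_abs_le ⟪δ • p - q, B v⟫
    linarith
  -- put everything together
  have hQw : coneForm (e 0) δ v (A v + B v)
      = δ * μ 0 * c ^ 2 - ⟪A q, q⟫ + ⟪δ • p - q, B v⟫ := by
    rw [hcone, inner_add_right, inner_sub_left, real_inner_smul_left, hpAv, hqAv]
    ring
  rw [ge_iff_le, hQw, hQvv]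
  have hδ' : δ ≠ 0 := ne_of_gt hδ
  have key : (μ 0 - ε * (1 + δ) / δ) * (δ * c ^ 2 - ‖q‖ ^ 2)
      = δ * μ 0 * c ^ 2 - (μ 0 - (ε * (1 + δ) + ε * (1 + δ) / δ)) * ‖q‖ ^ 2
        - ε * (1 + δ) * (c ^ 2 + ‖q‖ ^ 2) := by
    field_simp
    ring
  rw [key]
  rw [hκ] at hAqq
  linarith
end
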